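/- The free metabelian associative algebra A_2(M) on generators u, v (the free unital associative C-algebra on two generators modulo the T-ideal generated by [x1,x2][x3,x4]) has a C-vector space basis consisting of the elements u^a v^b and u^a v^b [v,u] u^c v^d, for a, b, c, d ≥ 0, where [v,u] = vu − uv. -/

import Mathlib

/-- The relation whose `RingQuot` is the free metabelian associative algebra:
we kill all products of two commutators, i.e. the T-ideal of
`[x₁,x₂][x₃,x₄]`. -/
def MetabelianRel (X : Type*) (x y : FreeAlgebra ℂ X) : Prop :=
  (∃ f1 f2 f3 f4 : FreeAlgebra ℂ X,
    x = (f1 * f2 - f2 * f1) * (f3 * f4 - f4 * f3)) ∧ y = 0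

/-- The free metabelian associative algebra on two generators over `ℂ`. -/
abbrev FreeMetabelian2 : Type := RingQuot (MetabelianRel (Fin 2))

noncomputable def Ugen : FreeMetabelian2 :=
  RingQuot.mkAlgHom ℂ (MetabelianRel (Fin 2)) (FreeAlgebra.ι ℂ 0)

noncomputable def Vgen : FreeMetabelian2 :=
  RingQuot.mkAlgHom ℂ (MetabelianRel (Fin 2)) (FreeAlgebra.ι ℂ 1)

/-!
Spanning: in a metabelian algebra `[a, b] x [c, d] = 0` for every `x`, and
`v ^ b * u = u * v ^ b + ∑ j < b, v ^ j * [v, u] * v ^ (b - 1 - j)`, so the span of the family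
is closed under right multiplication by `u` and `v`, hence is everything.

Independence: `u ↦ !![x₀, 0; 0, x₂]`, `v ↦ !![x₁, 1; 0, x₃]` is a representation of the free
metabelian algebra by upper triangular matrices over `ℂ[x₀, x₁, x₂, x₃]` (commutators of upper
triangular `2 × 2` matrices are strictly upper triangular, and those multiply to zero). The
`(0, 0)` entry sends `u ^ a * v ^ b` to `x₀ ^ a * x₁ ^ b` and kills the second family, while the
`(0, 1)` entry sends `u ^ a * v ^ b * [v, u] * u ^ c * v ^ d` to
`(x₂ - x₀) * x₀ ^ a * x₁ ^ b * x₂ ^ c * x₃ ^ d`.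
-/

open Finset

def IsMetabelian (A : Type*) [Ring A] : Prop :=
  ∀ a b c d : A, (a * b - b * a) * (c * d - d * c) = 0

section Metabelian

variable {X : Type*}

theorem isMetabelian_ringQuot_metabelianRel : IsMetabelian (RingQuot (MetabelianRel X)) := by
  intro a b c d
  obtain ⟨a, rfl⟩ := RingQuot.mkAlgHom_surjective ℂ (MetabelianRel X) a
  obtain ⟨b, rfl⟩ := RingQuot.mkAlgHom_surjective ℂ (MetabelianRel X) b
  obtain ⟨c, rfl⟩ := RingQuot.mkAlgHom_surjective ℂ (MetabelianRel X) c
  obtain ⟨d, rfl⟩ := RingQuot.mkAlgHom_surjective ℂ (MetabelianRel X) d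
  simpa only [map_mul, map_sub, map_zero] using
    RingQuot.mkAlgHom_rel ℂ (show MetabelianRel X _ 0 from ⟨⟨a, b, c, d, rfl⟩, rfl⟩)

variable {B : Type*} [Ring B] [Algebra ℂ B]

noncomputable def liftMetabelian (hB : IsMetabelian B) (g : X → B) :
    RingQuot (MetabelianRel X) →ₐ[ℂ] B :=
  RingQuot.liftAlgHom ℂ ⟨FreeAlgebra.lift ℂ g, by
    rintro _ _ ⟨⟨f₁, f₂, f₃, f₄, rfl⟩, rfl⟩
    simpa only [map_mul, map_sub, map_zero] using hB _ _ _ _⟩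

@[simp]
theorem liftMetabelian_mkAlgHom_ι (hB : IsMetabelian B) (g : X → B) (x : X) :
    liftMetabelian hB g (RingQuot.mkAlgHom ℂ (MetabelianRel X) (FreeAlgebra.ι ℂ x)) = g x := by
  simp [liftMetabelian]

end Metabelian

theorem RingQuot.adjoin_range_mkAlgHom_ι (R : Type*) {X : Type*} [CommSemiring R]
    (r : FreeAlgebra R X → FreeAlgebra R X → Prop) :
    Algebra.adjoin R (Set.range fun x => RingQuot.mkAlgHom R r (FreeAlgebra.ι R x)) = ⊤ := by
  rw [Set.range_comp', ← AlgHom.map_adjoin, FreeAlgebra.adjoin_range_ι, Algebra.map_top,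
    AlgHom.range_eq_top]
  exact RingQuot.mkAlgHom_surjective R r

theorem Submodule.span_range_eq_top_of_mul_mem {R A ι : Type*} [CommSemiring R] [Semiring A]
    [Algebra R A] {s : Set A} (hs : Algebra.adjoin R s = ⊤) {f : ι → A}
    (h1 : 1 ∈ span R (Set.range f))
    (hmul : ∀ i, ∀ g ∈ s, f i * g ∈ span R (Set.range f)) :
    span R (Set.range f) = ⊤ := by
  set S := span R (Set.range f)
  have hS : ∀ y ∈ S, ∀ g ∈ s, y * g ∈ S := by
    intro y hy g hg
    induction hy using Submodule.span_induction with
    | mem y hy => obtain ⟨i, rfl⟩ := hy; exact hmul i g hg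
    | zero => simp
    | add y z _ _ hy hz => rw [add_mul]; exact add_mem hy hz
    | smul r y _ hy => rw [smul_mul_assoc]; exact smul_mem _ r hy
  have hright : ∀ x : A, ∀ y ∈ S, y * x ∈ S := by
    intro x
    have hx : x ∈ Algebra.adjoin R s := hs ▸ Algebra.mem_top
    induction hx using Algebra.adjoin_induction with
    | mem g hg => exact fun y hy => hS y hy g hg
    | algebraMap r =>
      exact fun y hy => by rw [← Algebra.commutes, ← Algebra.smul_def]; exact smul_mem _ r hy
    | add x z _ _ hx hz => exact fun y hy => by rw [mul_add]; exact add_mem (hx y hy) (hz y hy)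
    | mul x z _ _ hx hz => exact fun y hy => by rw [← mul_assoc]; exact hz _ (hx y hy)
  exact eq_top_iff.2 fun x _ => one_mul x ▸ hright x 1 h1

theorem pow_mul_eq_mul_pow_add_sum {A : Type*} [Ring A] (u v : A) (n : ℕ) :
    v ^ n * u = u * v ^ n + ∑ j ∈ range n, v ^ j * (v * u - u * v) * v ^ (n - 1 - j) := by
  induction n with
  | zero => simp
  | succ n ih =>
    have hshift : ∀ j ∈ range n, v ^ j * (v * u - u * v) * v ^ (n - 1 - j) * v
        = v ^ j * (v * u - u * v) * v ^ (n + 1 - 1 - j) := by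
      intro j _
      rw [mul_assoc, ← pow_succ, show n - 1 - j + 1 = n + 1 - 1 - j by grind]
    calc v ^ (n + 1) * u = (v ^ n * u) * v + v ^ n * (v * u - u * v) := by noncomm_ring
      _ = _ := by
        rw [ih, add_mul, sum_mul, sum_congr rfl hshift, sum_range_succ, Nat.add_sub_cancel,
          Nat.sub_self, pow_zero, mul_one, mul_assoc u, ← pow_succ, add_assoc]

theorem IsMetabelian.commutator_mul_mul_commutator {A : Type*} [Ring A] (hA : IsMetabelian A)
    (a b c d x : A) :
    (a * b - b * a) * x * (c * d - d * c) = 0 := by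
  calc (a * b - b * a) * x * (c * d - d * c)
      = (a * b - b * a) * (x * c * d - d * (x * c)) - (a * b - b * a) * (x * d - d * x) * c := by
        noncomm_ring
    _ = 0 := by rw [hA a b, hA a b, zero_mul, sub_zero]

section StandardMonomial

variable {A : Type*} [Ring A]

def standardMonomial (u v : A) : (ℕ × ℕ) ⊕ (ℕ × ℕ × ℕ × ℕ) → A :=
  Sum.elim (fun p => u ^ p.1 * v ^ p.2)
    (fun p => u ^ p.1 * v ^ p.2.1 * (v * u - u * v) * u ^ p.2.2.1 * v ^ p.2.2.2)

variable {R : Type*} [CommSemiring R] [Algebra R A] (u v : A)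

theorem standardMonomial_mul_v_mem_span (i : (ℕ × ℕ) ⊕ (ℕ × ℕ × ℕ × ℕ)) :
    standardMonomial u v i * v ∈ Submodule.span R (Set.range (standardMonomial u v)) := by
  apply Submodule.subset_span
  rcases i with ⟨a, b⟩ | ⟨a, b, c, d⟩
  · exact ⟨.inl (a, b + 1), by simp only [standardMonomial, Sum.elim_inl, pow_succ, mul_assoc]⟩
  · exact ⟨.inr (a, b, c, d + 1),
      by simp only [standardMonomial, Sum.elim_inr, pow_succ, mul_assoc]⟩

variable {u v} in
theorem standardMonomial_mul_u_mem_span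
    (hA : IsMetabelian A) (i : (ℕ × ℕ) ⊕ (ℕ × ℕ × ℕ × ℕ)) :
    standardMonomial u v i * u ∈ Submodule.span R (Set.range (standardMonomial u v)) := by
  rcases i with ⟨a, b⟩ | ⟨a, b, c, d⟩
  · have h : standardMonomial u v (.inl (a, b)) * u = standardMonomial u v (.inl (a + 1, b)) +
        ∑ j ∈ range b, standardMonomial u v (.inr (a, j, 0, b - 1 - j)) := by
      simp only [standardMonomial, Sum.elim_inl, Sum.elim_inr, pow_zero, mul_one]
      rw [mul_assoc, pow_mul_eq_mul_pow_add_sum u v b, mul_add, mul_sum, pow_succ]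
      simp only [mul_assoc]
    rw [h]
    exact add_mem (Submodule.subset_span ⟨_, rfl⟩)
      (Submodule.sum_mem _ fun j _ => Submodule.subset_span ⟨_, rfl⟩)
  · have h : standardMonomial u v (.inr (a, b, c, d)) * u =
        standardMonomial u v (.inr (a, b, c + 1, d)) := by
      set p := u ^ a * v ^ b * (v * u - u * v) * u ^ c
      have hvanish : ∀ j ∈ range d, p * (v ^ j * (v * u - u * v) * v ^ (d - 1 - j)) = 0 := by
        intro j _
        calc p * (v ^ j * (v * u - u * v) * v ^ (d - 1 - j))
            = u ^ a * v ^ b * ((v * u - u * v) * (u ^ c * v ^ j) * (v * u - u * v))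
              * v ^ (d - 1 - j) := by simp only [p, mul_assoc]
          _ = 0 := by rw [hA.commutator_mul_mul_commutator, mul_zero, zero_mul]
      simp only [standardMonomial, Sum.elim_inr]
      rw [mul_assoc p, pow_mul_eq_mul_pow_add_sum u v d, mul_add, mul_sum, sum_congr rfl hvanish,
        sum_const_zero, add_zero, pow_succ]
      simp only [p, mul_assoc]
    rw [h]
    exact Submodule.subset_span ⟨_, rfl⟩

variable {u v} in
theorem span_standardMonomial_eq_top
    (hA : IsMetabelian A) (hgen : Algebra.adjoin R {u, v} = ⊤) :
    Submodule.span R (Set.range (standardMonomial u v)) = ⊤ := by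
  refine Submodule.span_range_eq_top_of_mul_mem hgen
    (Submodule.subset_span ⟨.inl (0, 0), by simp [standardMonomial]⟩) fun i g hg => ?_
  rcases hg with rfl | rfl
  · exact standardMonomial_mul_u_mem_span hA i
  · exact standardMonomial_mul_v_mem_span _ _ i

end StandardMonomial

theorem LinearIndependent.sum_elim_of_comp_eq_zero {R M N ι κ : Type*} [Ring R]
    [AddCommGroup M] [Module R M] [AddCommGroup N] [Module R N] {f : ι → M} {g : κ → M}
    (ℓ : M →ₗ[R] N) (hf : LinearIndependent R (ℓ ∘ f)) (hg : LinearIndependent R g)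
    (hℓg : ∀ k, ℓ (g k) = 0) : LinearIndependent R (Sum.elim f g) :=
  hf.of_comp.sum_type hg <| (Submodule.range_ker_disjoint hf).mono_right <|
    Submodule.span_le.2 <| Set.range_subset_iff.2 hℓg

theorem AlgHom.map_commutator {R A B : Type*} [CommRing R] [Ring A] [Algebra R A] [CommRing B]
    [Algebra R B] (φ : A →ₐ[R] B) (x y : A) : φ (x * y - y * x) = 0 := by
  rw [map_sub, map_mul, map_mul, mul_comm, sub_self]

namespace Matrix

theorem IsUpperTriangular.mul_apply_self {n A : Type*} [Fintype n] [LinearOrder n]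
    [NonUnitalNonAssocSemiring A] {M N : Matrix n n A} (hM : M.IsUpperTriangular)
    (hN : N.IsUpperTriangular) (i : n) : (M * N) i i = M i i * N i i := by
  rw [mul_apply, Finset.sum_eq_single i]
  · intro k _ hki
    rcases lt_or_gt_of_ne hki with h | h
    · rw [hM h, zero_mul]
    · rw [hN h, mul_zero]
  · simp

variable {n R A : Type*} [Fintype n] [DecidableEq n] [LinearOrder n] [CommRing R] [CommRing A]
  [Algebra R A]

variable (R A) in
def upperTriangularDiagHom (i : n) : blockTriangularSubalgebra R A (id : n → n) →ₐ[R] A where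
  toFun M := (M : Matrix n n A) i i
  map_one' := by simp
  map_mul' M N := IsUpperTriangular.mul_apply_self M.2 N.2 i
  map_zero' := rfl
  map_add' _ _ := rfl
  commutes' r := by simp [algebraMap_matrix_apply]

@[simp]
theorem upperTriangularDiagHom_apply (i : n) (M : blockTriangularSubalgebra R A (id : n → n)) :
    upperTriangularDiagHom R A i M = (M : Matrix n n A) i i :=
  rfl

theorem isUpperTriangular_fin_two {A : Type*} [Zero A] (a b d : A) :
    (!![a, b; 0, d]).IsUpperTriangular := by
  intro i j h
  fin_cases i <;> fin_cases j <;> first | rfl | exact absurd h (by decide)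

theorem isMetabelian_upperTriangular_fin_two :
    IsMetabelian (blockTriangularSubalgebra R A (id : Fin 2 → Fin 2)) := by
  intro a b c d
  have hdiag : ∀ x y : blockTriangularSubalgebra R A (id : Fin 2 → Fin 2), ∀ i,
      ((x * y - y * x : blockTriangularSubalgebra R A id) : Matrix (Fin 2) (Fin 2) A) i i = 0 :=
    fun x y i => (upperTriangularDiagHom R A i).map_commutator x y
  have hlow : ∀ x : blockTriangularSubalgebra R A (id : Fin 2 → Fin 2),
      (x : Matrix (Fin 2) (Fin 2) A) 1 0 = 0 := fun x => x.2 (by decide)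
  have hstrict : ∀ C D : Matrix (Fin 2) (Fin 2) A, C 0 0 = 0 → C 1 0 = 0 → C 1 1 = 0 →
      D 0 0 = 0 → D 1 0 = 0 → D 1 1 = 0 → C * D = 0 := by
    intro C D _ _ _ _ _ _
    ext i j
    fin_cases i <;> fin_cases j <;> simp [mul_apply, Fin.sum_univ_two, *]
  apply Subtype.ext
  rw [Subalgebra.coe_mul, ZeroMemClass.coe_zero]
  exact hstrict _ _ (hdiag a b 0) (hlow _) (hdiag a b 1) (hdiag c d 0) (hlow _) (hdiag c d 1)

end Matrix

theorem linearIndependent_X_pow_fin_four (R : Type*) [CommSemiring R] :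
    LinearIndependent R fun p : ℕ × ℕ × ℕ × ℕ =>
      (MvPolynomial.X 0 ^ p.1 * MvPolynomial.X 1 ^ p.2.1 * MvPolynomial.X 2 ^ p.2.2.1 *
        MvPolynomial.X 3 ^ p.2.2.2 : MvPolynomial (Fin 4) R) := by
  let e : ℕ × ℕ × ℕ × ℕ → Fin 4 →₀ ℕ := fun p =>
    .single 0 p.1 + .single 1 p.2.1 + .single 2 p.2.2.1 + .single 3 p.2.2.2
  have he : Function.Injective e := by
    rintro ⟨a, b, c, d⟩ ⟨a', b', c', d'⟩ h
    have h' := fun i => DFunLike.congr_fun h i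
    simp only [e, Finsupp.add_apply, Finsupp.single_apply] at h'
    have := h' 0; have := h' 1; have := h' 2; have := h' 3
    simp_all
  convert (MvPolynomial.basisMonomials (Fin 4) R).linearIndependent.comp e he using 1
  funext p
  simp [e, MvPolynomial.X_pow_eq_monomial, MvPolynomial.monomial_mul]

theorem adjoin_Ugen_Vgen_eq_top : Algebra.adjoin ℂ {Ugen, Vgen} = ⊤ := by
  rw [← RingQuot.adjoin_range_mkAlgHom_ι ℂ (MetabelianRel (Fin 2))]
  congr 1
  ext x
  simp [Fin.exists_fin_two, Ugen, Vgen, eq_comm]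

noncomputable section TriangularModel

open MvPolynomial

local notation "𝕋" =>
  Matrix.blockTriangularSubalgebra ℂ (MvPolynomial (Fin 4) ℂ) (id : Fin 2 → Fin 2)

def triangularModel : FreeMetabelian2 →ₐ[ℂ] 𝕋 :=
  liftMetabelian Matrix.isMetabelian_upperTriangular_fin_two
    ![⟨!![X 0, 0; 0, X 2], Matrix.isUpperTriangular_fin_two _ _ _⟩,
      ⟨!![X 1, 1; 0, X 3], Matrix.isUpperTriangular_fin_two _ _ _⟩]

theorem triangularModel_Ugen :
    (triangularModel Ugen : Matrix (Fin 2) (Fin 2) (MvPolynomial (Fin 4) ℂ)) =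
      !![X 0, 0; 0, X 2] := by
  simp [triangularModel, Ugen]

theorem triangularModel_Vgen :
    (triangularModel Vgen : Matrix (Fin 2) (Fin 2) (MvPolynomial (Fin 4) ℂ)) =
      !![X 1, 1; 0, X 3] := by
  simp [triangularModel, Vgen]

def diagCharacter (i : Fin 2) : FreeMetabelian2 →ₐ[ℂ] MvPolynomial (Fin 4) ℂ :=
  (Matrix.upperTriangularDiagHom ℂ _ i).comp triangularModel

def offDiagEntry : FreeMetabelian2 →ₗ[ℂ] MvPolynomial (Fin 4) ℂ :=
  Matrix.entryLinearMap ℂ _ 0 1 ∘ₗ (𝕋).val.toLinearMap ∘ₗ triangularModel.toLinearMap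

theorem offDiagEntry_mul (x y : FreeMetabelian2) :
    offDiagEntry (x * y) =
      diagCharacter 0 x * offDiagEntry y + offDiagEntry x * diagCharacter 1 y := by
  simp [offDiagEntry, diagCharacter, Matrix.mul_apply, Fin.sum_univ_two]

@[simp] theorem diagCharacter_zero_Ugen : diagCharacter 0 Ugen = X 0 := by
  simp [diagCharacter, triangularModel_Ugen]

@[simp] theorem diagCharacter_zero_Vgen : diagCharacter 0 Vgen = X 1 := by
  simp [diagCharacter, triangularModel_Vgen]

@[simp] theorem diagCharacter_one_Ugen : diagCharacter 1 Ugen = X 2 := by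
  simp [diagCharacter, triangularModel_Ugen]

@[simp] theorem diagCharacter_one_Vgen : diagCharacter 1 Vgen = X 3 := by
  simp [diagCharacter, triangularModel_Vgen]

@[simp] theorem offDiagEntry_Ugen : offDiagEntry Ugen = 0 := by
  simp [offDiagEntry, triangularModel_Ugen]

@[simp] theorem offDiagEntry_Vgen : offDiagEntry Vgen = 1 := by
  simp [offDiagEntry, triangularModel_Vgen]

theorem diagCharacter_standardMonomial_inr (i : Fin 2) (p : ℕ × ℕ × ℕ × ℕ) :
    diagCharacter i (standardMonomial Ugen Vgen (.inr p)) = 0 := by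
  simp only [standardMonomial, Sum.elim_inr, map_mul, AlgHom.map_commutator, mul_zero, zero_mul]

theorem offDiagEntry_standardMonomial_inr (a b c d : ℕ) :
    offDiagEntry (standardMonomial Ugen Vgen (.inr (a, b, c, d))) =
      (X 2 - X 0) * (X 0 ^ a * X 1 ^ b * X 2 ^ c * X 3 ^ d) := by
  have hcomm : offDiagEntry (Vgen * Ugen - Ugen * Vgen) = X 2 - X 0 := by
    simp [offDiagEntry_mul]
  simp only [standardMonomial, Sum.elim_inr, mul_assoc _ (Ugen ^ c)]
  rw [offDiagEntry_mul (Ugen ^ a * Vgen ^ b * _), offDiagEntry_mul (Ugen ^ a * Vgen ^ b),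
    map_mul (diagCharacter 0), AlgHom.map_commutator, AlgHom.map_commutator, hcomm]
  simp only [map_mul, map_pow, diagCharacter_zero_Ugen, diagCharacter_zero_Vgen,
    diagCharacter_one_Ugen, diagCharacter_one_Vgen]
  ring

theorem linearIndependent_standardMonomial :
    LinearIndependent ℂ (standardMonomial Ugen Vgen) := by
  have hmono := linearIndependent_X_pow_fin_four ℂ
  refine .sum_elim_of_comp_eq_zero (diagCharacter 0).toLinearMap ?_ ?_
    (diagCharacter_standardMonomial_inr 0)
  · simpa [Function.comp_def] using
      hmono.comp (fun p : ℕ × ℕ => (p.1, p.2, 0, 0)) fun p q h => by simpa [Prod.ext_iff] using h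
  · have hne : (X 2 - X 0 : MvPolynomial (Fin 4) ℂ) ≠ 0 :=
      sub_ne_zero.2 (X_injective.ne (by decide))
    refine .of_comp offDiagEntry ?_
    have h : offDiagEntry ∘ (fun p : ℕ × ℕ × ℕ × ℕ => Ugen ^ p.1 * Vgen ^ p.2.1 *
          (Vgen * Ugen - Ugen * Vgen) * Ugen ^ p.2.2.1 * Vgen ^ p.2.2.2) =
        LinearMap.mulLeft ℂ (X 2 - X 0 : MvPolynomial (Fin 4) ℂ) ∘
          (fun p : ℕ × ℕ × ℕ × ℕ => X 0 ^ p.1 * X 1 ^ p.2.1 * X 2 ^ p.2.2.1 * X 3 ^ p.2.2.2) :=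
      funext fun p => offDiagEntry_standardMonomial_inr p.1 p.2.1 p.2.2.1 p.2.2.2
    rw [h]
    exact hmono.map' _ (LinearMap.ker_eq_bot.2 (mul_right_injective₀ hne))

end TriangularModel

theorem freeMetabelian_basis :
    ∃ B : Module.Basis ((ℕ × ℕ) ⊕ (ℕ × ℕ × ℕ × ℕ)) ℂ FreeMetabelian2,
      (∀ a b : ℕ, B (Sum.inl (a, b)) = Ugen ^ a * Vgen ^ b) ∧
      (∀ a b c d : ℕ, B (Sum.inr (a, b, c, d)) =
        Ugen ^ a * Vgen ^ b * (Vgen * Ugen - Ugen * Vgen) * Ugen ^ c *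
          Vgen ^ d) := by
  have hspan :=
    span_standardMonomial_eq_top isMetabelian_ringQuot_metabelianRel adjoin_Ugen_Vgen_eq_top
  refine ⟨.mk linearIndependent_standardMonomial hspan.ge, fun a b => ?_, fun a b c d => ?_⟩ <;>
    rw [Module.Basis.mk_apply] <;> rfl
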